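/- The graph of the maximizing-measure correspondence is closed: the set {(f, μ) ∈ C(X,ℝ) × M : μ is f-maximizing} is closed in C(X,ℝ) × M (where C(X,ℝ) carries the supremum-norm topology and M the weak* topology). Equivalently, if f_n → f in C(X,ℝ), μ_n → μ in the weak* topology, and μ_n is f_n-maximizing for each n, then μ is f-maximizing. -/

import Mathlib

open MeasureTheory Topology Filter
open scoped NNReal

variable {X : Type*} [MetricSpace X] [CompactSpace X] [Nonempty X]
  [MeasurableSpace X] [BorelSpace X]

/-- The set of `T`-invariant Borel probability measures on `X`,
equipped (as a subtype) with the weak* topology. -/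
def Minv (T : X → X) : Set (ProbabilityMeasure X) :=
  {μ | (μ : Measure X).map T = (μ : Measure X)}

/-- The integral of a continuous function against a probability measure. -/
noncomputable def intf (f : C(X, ℝ)) (μ : ProbabilityMeasure X) : ℝ :=
  ∫ x, f x ∂(μ : Measure X)

/-- The maximum ergodic average `β(f) = sup {∫ f dμ : μ ∈ M}`. -/
noncomputable def beta (T : X → X) (f : C(X, ℝ)) : ℝ :=
  sSup (intf f '' Minv T)

/-- The set of `f`-maximizing measures. -/
def MMax (T : X → X) (f : C(X, ℝ)) : Set (ProbabilityMeasure X) :=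
  {μ ∈ Minv T | intf f μ = beta T f}

/-!
A measure `μ ∈ M` is `f`-maximizing exactly when `∫ f dν ≤ ∫ f dμ` for every `ν ∈ M`, so the graph
is the intersection over `ν ∈ M` of the sets `{(f, μ) | ∫ f dν ≤ ∫ f dμ}`. Each of these is closed
because `(f, μ) ↦ ∫ f dμ` is jointly continuous: it is weak* continuous in `μ` and 1-Lipschitz in `f`
uniformly in `μ`.
-/

section

omit [Nonempty X]

open BoundedContinuousFunction

lemma abs_intf_le_norm (f : C(X, ℝ)) (μ : ProbabilityMeasure X) : |intf f μ| ≤ ‖f‖ := by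
  simpa [intf, Real.norm_eq_abs] using (mkOfCompact f).norm_integral_le_norm (μ : Measure X)

lemma intf_sub (f g : C(X, ℝ)) (μ : ProbabilityMeasure X) :
    intf (f - g) μ = intf f μ - intf g μ :=
  integral_sub ((mkOfCompact f).integrable _) ((mkOfCompact g).integrable _)

lemma lipschitzWith_intf (μ : ProbabilityMeasure X) : LipschitzWith 1 fun f => intf f μ :=
  LipschitzWith.mk_one fun f g => by
    simpa [Real.dist_eq, dist_eq_norm, intf_sub] using abs_intf_le_norm (f - g) μ

lemma continuous_intf_right (f : C(X, ℝ)) : Continuous (intf f) :=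
  ProbabilityMeasure.continuous_integral_boundedContinuousFunction (mkOfCompact f)

lemma continuous_intf_uncurry :
    Continuous fun p : C(X, ℝ) × ProbabilityMeasure X => intf p.1 p.2 :=
  continuous_prod_of_continuous_lipschitzWith _ 1 continuous_intf_right lipschitzWith_intf

lemma bddAbove_intf_image (f : C(X, ℝ)) (s : Set (ProbabilityMeasure X)) :
    BddAbove (intf f '' s) :=
  ⟨‖f‖, by rintro _ ⟨ν, -, rfl⟩; exact (le_abs_self _).trans (abs_intf_le_norm f ν)⟩

lemma intf_le_beta (T : X → X) (f : C(X, ℝ)) {μ : ProbabilityMeasure X} (hμ : μ ∈ Minv T) :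
    intf f μ ≤ beta T f :=
  le_csSup (bddAbove_intf_image f _) ⟨μ, hμ, rfl⟩

lemma mem_MMax_iff (T : X → X) (f : C(X, ℝ)) {μ : ProbabilityMeasure X} (hμ : μ ∈ Minv T) :
    μ ∈ MMax T f ↔ ∀ ν ∈ Minv T, intf f ν ≤ intf f μ := by
  refine ⟨fun h ν hν => h.2 ▸ intf_le_beta T f hν, fun h => ⟨hμ, ?_⟩⟩
  exact (intf_le_beta T f hμ).antisymm
    (csSup_le ⟨_, μ, hμ, rfl⟩ (by rintro _ ⟨ν, hν, rfl⟩; exact h ν hν))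

end

theorem closed_graph_of_MMax_general (T : X → X) :
    IsClosed {p : C(X, ℝ) × (Minv T) | (p.2 : ProbabilityMeasure X) ∈ MMax T p.1} := by
  have hgraph : {p : C(X, ℝ) × (Minv T) | (p.2 : ProbabilityMeasure X) ∈ MMax T p.1}
      = ⋂ ν ∈ Minv T, {p | intf p.1 ν ≤ intf p.1 p.2} := by
    ext p
    simp only [Set.mem_ofPred_eq, Set.mem_iInter, mem_MMax_iff T p.1 p.2.2]
  rw [hgraph]
  refine isClosed_biInter fun ν _ => isClosed_le ?_ ?_
  · exact (lipschitzWith_intf ν).continuous.comp continuous_fst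
  · exact continuous_intf_uncurry.comp (continuous_fst.prodMk continuous_snd.subtype_val)

/-- The graph of the maximizing-measure correspondence is closed in `C(X,ℝ) × M`. -/
theorem closed_graph_of_MMax (T : X → X) (hT : Continuous T) (hM : (Minv T).Nonempty) :
    IsClosed {p : C(X, ℝ) × (Minv T) | (p.2 : ProbabilityMeasure X) ∈ MMax T p.1} :=
  closed_graph_of_MMax_general T
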